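/- arXiv:1912.12625 — 2 statements merged into one kernel-verified Lean document; each statement's English description precedes it below -/
import Mathlib

section
/- Let λ > 0, c > 0, t > 0, and define F(u,t) = ∑_{k=0}^∞ (λ/(2c))^{2k} (c²t² − u²)^k / (k!)². Then ∫₀^{ct} (∂²F/∂t²)(u,t) du = (cλ/2)(e^{λt} − e^{−λt}) − cλ²t/2. -/
/-!
As a function of `s`, `F lam c u s = G (c²s² - u²)` for the entire power series
`G x = ∑ qᵏ xᵏ / (k!)²`, `q = (lam / 2c)²`. Differentiating twice by the chain rule,
`∂²F/∂t² = G''(g) (2c²t)² + G'(g) 2c²` with `g = (ct)² - u²`, and both series may be integrated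
term by term, using `∫₀ᵇ (b² - u²)ᵐ du = 4ᵐ (m!)² b^(2m+1) / (2m+1)!`. Pairing the `k`-th term of
the first series with the `(k+1)`-st term of the second gives `cλ (λt)^(2k+3) / (2k+3)!`, the
tail of `cλ sinh (λt)`; the `0`-th term of the second series, `cλ²t/2`, is left over.
-/

/-- `F(u,t) = ∑_{k=0}^∞ (λ/(2c))^{2k} (c²t² − u²)^k / (k!)²`,
which equals `I₀((λ/c)√(c²t² − u²))` for `|u| ≤ ct`. -/
noncomputable def F (lam c u t : ℝ) : ℝ :=
  ∑' k : ℕ, (lam / (2 * c)) ^ (2 * k) * (c ^ 2 * t ^ 2 - u ^ 2) ^ k /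
    ((Nat.factorial k : ℝ)) ^ 2

open Real Metric MeasureTheory
open scoped Nat

noncomputable def powerSum (p : ℕ → ℝ) (x : ℝ) : ℝ := ∑' k, p k * x ^ k

def derivCoeff (p : ℕ → ℝ) (k : ℕ) : ℝ := (k + 1) * p (k + 1)

section ExponentialType

variable {p : ℕ → ℝ} {C ρ : ℝ}

lemma abs_derivCoeff_le (hp : ∀ k, |p k| ≤ C * ρ ^ k / k !) (k : ℕ) :
    |derivCoeff p k| ≤ C * ρ * ρ ^ k / k ! := by
  have hk : (0 : ℝ) ≤ k + 1 := by positivity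
  calc |derivCoeff p k| = (k + 1) * |p (k + 1)| := by
        rw [derivCoeff, abs_mul, abs_of_nonneg hk]
    _ ≤ (k + 1) * (C * ρ ^ (k + 1) / (k + 1)!) := mul_le_mul_of_nonneg_left (hp _) hk
    _ = C * ρ * ρ ^ k / k ! := by
        rw [Nat.factorial_succ]; push_cast; field_simp; ring

lemma summable_mul_pow_div_factorial (C r : ℝ) : Summable fun k => C * r ^ k / k ! :=
  ((summable_pow_div_factorial r).mul_left C).congr fun _ => (mul_div_assoc ..).symm

lemma norm_mul_pow_le (hp : ∀ k, |p k| ≤ C * ρ ^ k / k !) {x R : ℝ} (hx : |x| ≤ R) (k : ℕ) :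
    ‖p k * x ^ k‖ ≤ C * (ρ * R) ^ k / k ! := by
  calc ‖p k * x ^ k‖ = |p k| * |x| ^ k := by rw [Real.norm_eq_abs, abs_mul, abs_pow]
    _ ≤ C * ρ ^ k / k ! * R ^ k :=
        mul_le_mul (hp k) (pow_le_pow_left₀ (abs_nonneg x) hx k) (by positivity)
          ((abs_nonneg _).trans (hp k))
    _ = C * (ρ * R) ^ k / k ! := by ring

lemma summable_mul_pow (hp : ∀ k, |p k| ≤ C * ρ ^ k / k !) (x : ℝ) :
    Summable fun k => p k * x ^ k :=
  .of_norm_bounded (summable_mul_pow_div_factorial C (ρ * |x|)) (norm_mul_pow_le hp le_rfl)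

lemma hasDerivAt_powerSum (hp : ∀ k, |p k| ≤ C * ρ ^ k / k !) (x : ℝ) :
    HasDerivAt (powerSum p) (powerSum (derivCoeff p) x) x := by
  obtain ⟨R, hR, hx⟩ : ∃ R : ℝ, 1 ≤ R ∧ x ∈ ball (0 : ℝ) R := ⟨|x| + 1, by simp, by simp⟩
  have hbound : ∀ k, ∀ y ∈ ball (0 : ℝ) R,
      ‖p k * (k * y ^ (k - 1))‖ ≤ C * (ρ * (2 * R)) ^ k / k ! := by
    intro k y hy
    have hy : |y| ≤ R := (mem_ball_zero_iff.1 hy).le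
    have hk : (k : ℝ) * |y| ^ (k - 1) ≤ (2 * R) ^ k := by
      rw [mul_pow]
      gcongr
      · exact_mod_cast (Nat.lt_two_pow_self (n := k)).le
      · exact (pow_le_pow_left₀ (abs_nonneg y) hy _).trans
          (pow_le_pow_right₀ hR (Nat.sub_le k 1))
    calc ‖p k * (k * y ^ (k - 1))‖ = |p k| * (k * |y| ^ (k - 1)) := by
          rw [Real.norm_eq_abs, abs_mul, abs_mul, abs_pow, Nat.abs_cast]
      _ ≤ C * ρ ^ k / k ! * (2 * R) ^ k :=
          mul_le_mul (hp k) hk (by positivity) ((abs_nonneg _).trans (hp k))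
      _ = C * (ρ * (2 * R)) ^ k / k ! := by ring
  have hsum := hasDerivAt_tsum_of_isPreconnected (summable_mul_pow_div_factorial C _)
    isOpen_ball (convex_ball 0 R).isPreconnected
    (fun k y _ => (hasDerivAt_pow k y).const_mul (p k)) hbound hx (summable_mul_pow hp x) hx
  refine hsum.congr_deriv ?_
  have hterm : ∀ k : ℕ,
      p (k + 1) * ((k + 1 : ℕ) * x ^ (k + 1 - 1)) = derivCoeff p k * x ^ k := by
    intro k
    rw [derivCoeff, Nat.add_sub_cancel, Nat.cast_succ, mul_assoc, mul_left_comm]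
  have hshift := (summable_mul_pow (abs_derivCoeff_le hp) x).congr fun k => (hterm k).symm
  rw [tsum_eq_zero_add' (f := fun k : ℕ => p k * (k * x ^ (k - 1))) hshift]
  simp only [hterm, CharP.cast_eq_zero, zero_mul, mul_zero, zero_add, powerSum]

lemma continuous_powerSum (hp : ∀ k, |p k| ≤ C * ρ ^ k / k !) : Continuous (powerSum p) :=
  continuous_iff_continuousAt.2 fun x => (hasDerivAt_powerSum hp x).continuousAt

lemma iteratedDeriv_two_powerSum_comp (hp : ∀ k, |p k| ≤ C * ρ ^ k / k !) {g g' g'' : ℝ → ℝ}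
    (hg : ∀ x, HasDerivAt g (g' x) x) (hg' : ∀ x, HasDerivAt g' (g'' x) x) (x : ℝ) :
    iteratedDeriv 2 (fun x => powerSum p (g x)) x =
      powerSum (derivCoeff (derivCoeff p)) (g x) * g' x ^ 2 +
        powerSum (derivCoeff p) (g x) * g'' x := by
  have hderiv : deriv (fun x => powerSum p (g x)) = fun x => powerSum (derivCoeff p) (g x) * g' x :=
    funext fun x => ((hasDerivAt_powerSum hp (g x)).comp x (hg x)).deriv
  have hderiv' : HasDerivAt (fun x => powerSum (derivCoeff p) (g x) * g' x)
      (powerSum (derivCoeff (derivCoeff p)) (g x) * g' x * g' x +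
        powerSum (derivCoeff p) (g x) * g'' x) x :=
    ((hasDerivAt_powerSum (abs_derivCoeff_le hp) (g x)).comp x (hg x)).mul (hg' x)
  rw [show (2 : ℕ) = 1 + 1 from rfl, iteratedDeriv_succ, iteratedDeriv_one, hderiv, hderiv'.deriv]
  ring

lemma hasSum_integral_powerSum_comp (hp : ∀ k, |p k| ≤ C * ρ ^ k / k !) {f : ℝ → ℝ}
    (hf : Continuous f) (a b : ℝ) :
    HasSum (fun k => p k * ∫ u in a..b, f u ^ k) (∫ u in a..b, powerSum p (f u)) := by
  obtain ⟨M, hM⟩ :=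
    (isCompact_uIcc (a := a) (b := b)).exists_bound_of_continuousOn hf.continuousOn
  simp_rw [← intervalIntegral.integral_const_mul]
  exact intervalIntegral.hasSum_integral_of_dominated_convergence
    (fun k _ => C * (ρ * M) ^ k / k !)
    (fun k => (by fun_prop : Continuous fun u => p k * f u ^ k).aestronglyMeasurable)
    (fun k => ae_of_all _ fun u hu => norm_mul_pow_le hp (hM u (Set.uIoc_subset_uIcc hu)) k)
    (ae_of_all _ fun _ _ => summable_mul_pow_div_factorial C _) intervalIntegrable_const
    (ae_of_all _ fun u _ => (summable_mul_pow hp (f u)).hasSum)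

end ExponentialType

lemma integral_sq_sub_sq_pow_succ (b : ℝ) (m : ℕ) :
    (2 * m + 3) * ∫ u in (0 : ℝ)..b, (b ^ 2 - u ^ 2) ^ (m + 1) =
      2 * (m + 1) * b ^ 2 * ∫ u in (0 : ℝ)..b, (b ^ 2 - u ^ 2) ^ m := by
  have hder : ∀ u, HasDerivAt (fun u => u * (b ^ 2 - u ^ 2) ^ (m + 1))
      ((2 * m + 3) * (b ^ 2 - u ^ 2) ^ (m + 1) - 2 * (m + 1) * b ^ 2 * (b ^ 2 - u ^ 2) ^ m) u := by
    intro u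
    have h := (hasDerivAt_id u).mul (((hasDerivAt_pow 2 u).const_sub (b ^ 2)).pow (m + 1))
    refine h.congr_deriv ?_
    simp only [id, Pi.pow_apply, Nat.add_sub_cancel]
    push_cast
    ring
  have h := intervalIntegral.integral_eq_sub_of_hasDerivAt (a := 0) (b := b)
    (fun u _ => hder u) (by apply Continuous.intervalIntegrable; fun_prop)
  rw [intervalIntegral.integral_sub (by apply Continuous.intervalIntegrable; fun_prop)
    (by apply Continuous.intervalIntegrable; fun_prop), intervalIntegral.integral_const_mul,
    intervalIntegral.integral_const_mul] at h
  simpa [sub_eq_zero] using h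

lemma integral_sq_sub_sq_pow (b : ℝ) (m : ℕ) :
    ∫ u in (0 : ℝ)..b, (b ^ 2 - u ^ 2) ^ m =
      4 ^ m * (m ! : ℝ) ^ 2 / (2 * m + 1)! * b ^ (2 * m + 1) := by
  induction m with
  | zero => simp
  | succ m ih =>
    rw [← mul_right_inj' (show (2 * m + 3 : ℝ) ≠ 0 by positivity), integral_sq_sub_sq_pow_succ,
      ih, show 2 * (m + 1) + 1 = 2 * m + 1 + 1 + 1 by ring, Nat.factorial_succ (2 * m + 1 + 1),
      Nat.factorial_succ (2 * m + 1), Nat.factorial_succ m]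
    push_cast
    field_simp
    ring

lemma hasSum_integral_powerSum_sq_sub_sq {p : ℕ → ℝ} {C ρ : ℝ}
    (hp : ∀ k, |p k| ≤ C * ρ ^ k / k !) (b : ℝ) :
    HasSum (fun k => p k * (4 ^ k * (k ! : ℝ) ^ 2 / (2 * k + 1)! * b ^ (2 * k + 1)))
      (∫ u in (0 : ℝ)..b, powerSum p (b ^ 2 - u ^ 2)) := by
  have h := hasSum_integral_powerSum_comp hp (f := fun u => b ^ 2 - u ^ 2) (by fun_prop) 0 b
  simp only [integral_sq_sub_sq_pow] at h
  exact h

/-- `powerSum (besselCoeff q) x = I₀ (2 √(q x))` whenever `q x ≥ 0`. -/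
noncomputable def besselCoeff (q : ℝ) (k : ℕ) : ℝ := q ^ k / (k ! : ℝ) ^ 2

lemma abs_besselCoeff_le (q : ℝ) (k : ℕ) : |besselCoeff q k| ≤ 1 * |q| ^ k / k ! := by
  have hfac : (1 : ℝ) ≤ k ! := by exact_mod_cast Nat.one_le_iff_ne_zero.2 (Nat.factorial_ne_zero k)
  rw [besselCoeff, abs_div, abs_pow, one_mul, abs_of_nonneg (sq_nonneg (k ! : ℝ))]
  exact div_le_div_of_nonneg_left (by positivity) (by positivity) (le_self_pow₀ hfac two_ne_zero)

lemma F_eq_powerSum (lam c u s : ℝ) :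
    F lam c u s = powerSum (besselCoeff ((lam / (2 * c)) ^ 2)) (c ^ 2 * s ^ 2 - u ^ 2) :=
  tsum_congr fun k => by rw [besselCoeff, pow_mul]; ring

lemma iteratedDeriv_two_F (lam c u t : ℝ) :
    iteratedDeriv 2 (fun s => F lam c u s) t =
      powerSum (derivCoeff (derivCoeff (besselCoeff ((lam / (2 * c)) ^ 2))))
          ((c * t) ^ 2 - u ^ 2) * (2 * c ^ 2 * t) ^ 2 +
        powerSum (derivCoeff (besselCoeff ((lam / (2 * c)) ^ 2)))
          ((c * t) ^ 2 - u ^ 2) * (2 * c ^ 2) := by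
  have hg : ∀ s : ℝ, HasDerivAt (fun s => c ^ 2 * s ^ 2 - u ^ 2) (2 * c ^ 2 * s) s := fun s => by
    simpa [mul_comm, mul_left_comm] using
      ((hasDerivAt_pow 2 s).const_mul (c ^ 2)).sub_const (u ^ 2)
  have hg' : ∀ s : ℝ, HasDerivAt (fun s => 2 * c ^ 2 * s) (2 * c ^ 2) s := fun s => by
    simpa using (hasDerivAt_id s).const_mul (2 * c ^ 2)
  simp only [F_eq_powerSum]
  rw [iteratedDeriv_two_powerSum_comp (abs_besselCoeff_le _) hg hg', mul_pow c t]

lemma integral_iteratedDeriv_two_F (lam c t : ℝ) :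
    ∫ u in (0 : ℝ)..(c * t), iteratedDeriv 2 (fun s => F lam c u s) t =
      (∫ u in (0 : ℝ)..(c * t), powerSum (derivCoeff (derivCoeff
          (besselCoeff ((lam / (2 * c)) ^ 2)))) ((c * t) ^ 2 - u ^ 2)) * (2 * c ^ 2 * t) ^ 2 +
        (∫ u in (0 : ℝ)..(c * t), powerSum (derivCoeff
          (besselCoeff ((lam / (2 * c)) ^ 2))) ((c * t) ^ 2 - u ^ 2)) * (2 * c ^ 2) := by
  have hp := abs_besselCoeff_le ((lam / (2 * c)) ^ 2)
  have hsq : Continuous fun u : ℝ => (c * t) ^ 2 - u ^ 2 := by fun_prop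
  rw [intervalIntegral.integral_congr fun u _ => iteratedDeriv_two_F lam c u t,
    intervalIntegral.integral_add, intervalIntegral.integral_mul_const,
    intervalIntegral.integral_mul_const]
  · exact (((continuous_powerSum (abs_derivCoeff_le (abs_derivCoeff_le hp))).comp hsq).mul
      continuous_const).intervalIntegrable _ _
  · exact (((continuous_powerSum (abs_derivCoeff_le hp)).comp hsq).mul
      continuous_const).intervalIntegrable _ _

lemma besselCoeff_integral_terms_add (lam c t : ℝ) (hc : c ≠ 0) (k : ℕ) :
    derivCoeff (derivCoeff (besselCoeff ((lam / (2 * c)) ^ 2))) k *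
        (4 ^ k * (k ! : ℝ) ^ 2 / (2 * k + 1)! * (c * t) ^ (2 * k + 1)) * (2 * c ^ 2 * t) ^ 2 +
      derivCoeff (besselCoeff ((lam / (2 * c)) ^ 2)) (k + 1) *
        (4 ^ (k + 1) * ((k + 1)! : ℝ) ^ 2 / (2 * (k + 1) + 1)! * (c * t) ^ (2 * (k + 1) + 1)) *
          (2 * c ^ 2) =
      c * lam * ((lam * t) ^ (2 * (k + 1) + 1) / (2 * (k + 1) + 1)!) := by
  simp only [derivCoeff, besselCoeff, div_pow, mul_pow]
  rw [show 2 * (k + 1) + 1 = 2 * k + 1 + 1 + 1 by ring, Nat.factorial_succ (2 * k + 1 + 1),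
    Nat.factorial_succ (2 * k + 1), Nat.factorial_succ (k + 1), Nat.factorial_succ k]
  push_cast
  field_simp
  ring

lemma hasSum_sinh_sub_self (x : ℝ) :
    HasSum (fun k => x ^ (2 * (k + 1) + 1) / (2 * (k + 1) + 1)!) (sinh x - x) := by
  simpa using (hasSum_nat_add_iff' 1).2 (Real.hasSum_sinh x)

theorem integral_d2F_dt2_general
    (lam c t : ℝ) (hc : 0 < c) :
    ∫ u in (0 : ℝ)..(c * t), iteratedDeriv 2 (fun s => F lam c u s) t =
      c * lam / 2 * (Real.exp (lam * t) - Real.exp (-(lam * t))) - c * lam ^ 2 * t / 2 := by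
  have hp := abs_besselCoeff_le ((lam / (2 * c)) ^ 2)
  have h₂ := (hasSum_integral_powerSum_sq_sub_sq (abs_derivCoeff_le (abs_derivCoeff_le hp))
    (c * t)).mul_right ((2 * c ^ 2 * t) ^ 2)
  have h₁ := (hasSum_nat_add_iff' 1).2
    ((hasSum_integral_powerSum_sq_sub_sq (abs_derivCoeff_le hp) (c * t)).mul_right (2 * c ^ 2))
  have key := (funext (besselCoeff_integral_terms_add lam c t hc.ne') ▸ h₂.add h₁).unique
    ((hasSum_sinh_sub_self (lam * t)).mul_left (c * lam))
  simp only [Finset.sum_range_one, mul_zero, zero_add, pow_zero, pow_one, Nat.factorial_zero,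
    Nat.cast_one, one_pow, one_mul, sinh_eq] at key
  have hB₀ : derivCoeff (besselCoeff ((lam / (2 * c)) ^ 2)) 0 * (c * t) * (2 * c ^ 2) =
      c * lam ^ 2 * t / 2 := by
    simp only [derivCoeff, besselCoeff, Nat.cast_zero, zero_add, pow_one, Nat.factorial_one,
      Nat.cast_one]
    field_simp
  rw [integral_iteratedDeriv_two_F]
  linear_combination key + hB₀

theorem integral_d2F_dt2
    (lam c t : ℝ) (hlam : 0 < lam) (hc : 0 < c) (ht : 0 < t) :
    ∫ u in (0 : ℝ)..(c * t), iteratedDeriv 2 (fun s => F lam c u s) t =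
      c * lam / 2 * (Real.exp (lam * t) - Real.exp (-(lam * t))) - c * lam ^ 2 * t / 2 :=
  integral_d2F_dt2_general lam c t hc
end

section
/- Let λ > 0, c > 0, t > 0, and define the three-dimensional density p₃(u,t) = (e^{−λt}/c) [ −λ F(u,t) − 3(∂F/∂t)(u,t) + (2/λ)(∂²F/∂t²)(u,t) + (4/λ²)(∂³F/∂t³)(u,t) ], where F(u,t) = ∑_{k=0}^∞ (λ/(2c))^{2k} (c²t² − u²)^k / (k!)². Then ∫₀^{ct} p₃(u,t) du = 1 − e^{−λt} − λt e^{−λt} − (λ²t²/2) e^{−λt}. -/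
/-- The density of the absolutely continuous component of the cyclic motion in ℝ³:
`p₃(u,t) = (e^{−λt}/c)[−λF − 3∂F/∂t + (2/λ)∂²F/∂t² + (4/λ²)∂³F/∂t³]`. -/
noncomputable def density3d (lam c u t : ℝ) : ℝ :=
  Real.exp (-(lam * t)) / c *
    (-(lam * F lam c u t) - 3 * deriv (fun s => F lam c u s) t +
      2 / lam * iteratedDeriv 2 (fun s => F lam c u s) t +
      4 / lam ^ 2 * iteratedDeriv 3 (fun s => F lam c u s) t)

open Nat Real

theorem hasDerivAt_tsum_mul_pow_of_abs_le_inv_factorial {a : ℕ → ℝ}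
    (ha : ∀ k, |a k| ≤ 1 / (k ! : ℝ)) (x : ℝ) :
    HasDerivAt (fun y => ∑' k, a k * y ^ k) (∑' k, (k + 1) * a (k + 1) * x ^ k) x := by
  set R := |x| + 1
  have hbound : ∀ k, ∀ y ∈ Metric.ball (0 : ℝ) R,
      ‖a k * (k * y ^ (k - 1))‖ ≤ k * R ^ (k - 1) / k ! := by
    intro k y hy
    rw [mem_ball_zero_iff] at hy
    rw [norm_mul, norm_mul, norm_pow, RCLike.norm_natCast, div_eq_mul_one_div, mul_comm]
    gcongr
    exact ha k
  have hsum : Summable fun k : ℕ => (k : ℝ) * R ^ (k - 1) / k ! := by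
    refine (summable_nat_add_iff 1).mp ((Real.summable_pow_div_factorial R).congr fun k => ?_)
    rw [Nat.factorial_succ]
    push_cast
    field_simp
  have hx : x ∈ Metric.ball (0 : ℝ) R := by simp [R]
  have hderiv := hasDerivAt_tsum_of_isPreconnected hsum Metric.isOpen_ball
    (convex_ball (0 : ℝ) R).isPreconnected
    (fun k y _ => (hasDerivAt_pow k y).const_mul (a k)) hbound (y₀ := 0)
    (Metric.mem_ball_self (by positivity))
    (summable_of_ne_finset_zero (s := {0}) (by intro k hk; simp_all)) hx
  refine hderiv.congr_deriv ?_
  rw [(Summable.of_norm_bounded hsum fun k => hbound k x hx).tsum_eq_zero_add]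
  simp only [Nat.cast_zero, zero_mul, mul_zero, zero_add, Nat.add_sub_cancel, Nat.cast_add,
    Nat.cast_one]
  exact tsum_congr fun k => by ring

theorem summable_mul_pow_of_abs_le_inv_factorial {a : ℕ → ℝ} (ha : ∀ k, |a k| ≤ 1 / (k ! : ℝ))
    (x : ℝ) : Summable fun k => a k * x ^ k :=
  Summable.of_norm_bounded (Real.summable_pow_div_factorial |x|) fun k => by
    rw [norm_mul, norm_pow, Real.norm_eq_abs, Real.norm_eq_abs, div_eq_mul_one_div, mul_comm]
    gcongr
    exact ha k

/-- `besselSeries m x = x^(-m/2) I_m(2√x)`, with `I_m` the modified Bessel function. -/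
noncomputable def besselSeries (m : ℕ) (x : ℝ) : ℝ :=
  ∑' k : ℕ, ((k ! * (k + m)! : ℕ) : ℝ)⁻¹ * x ^ k

theorem abs_inv_factorial_mul_factorial_le (m k : ℕ) :
    |((k ! * (k + m)! : ℕ) : ℝ)⁻¹| ≤ 1 / (k ! : ℝ) := by
  rw [abs_of_nonneg (by positivity), one_div]
  gcongr
  exact Nat.le_mul_of_pos_right _ (Nat.factorial_pos _)

theorem summable_besselSeries (m : ℕ) (x : ℝ) :
    Summable fun k : ℕ => ((k ! * (k + m)! : ℕ) : ℝ)⁻¹ * x ^ k :=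
  summable_mul_pow_of_abs_le_inv_factorial (abs_inv_factorial_mul_factorial_le m) x

theorem hasDerivAt_besselSeries (m : ℕ) (x : ℝ) :
    HasDerivAt (besselSeries m) (besselSeries (m + 1) x) x := by
  refine (hasDerivAt_tsum_mul_pow_of_abs_le_inv_factorial
    (abs_inv_factorial_mul_factorial_le m) x).congr_deriv (tsum_congr fun k => ?_)
  rw [show k + 1 + m = k + (m + 1) by ring]
  push_cast
  rw [Nat.factorial_succ]
  push_cast
  field_simp

@[fun_prop]
theorem continuous_besselSeries (m : ℕ) : Continuous (besselSeries m) :=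
  continuous_iff_continuousAt.mpr fun x => (hasDerivAt_besselSeries m x).continuousAt

section Quadratic

variable (A B : ℝ)

theorem hasDerivAt_besselSeries_quadratic (m : ℕ) (s : ℝ) :
    HasDerivAt (fun s => besselSeries m (A * s ^ 2 + B))
      (2 * A * s * besselSeries (m + 1) (A * s ^ 2 + B)) s := by
  refine ((hasDerivAt_besselSeries m _).comp s
    (((hasDerivAt_pow 2 s).const_mul A).add_const B)).congr_deriv ?_
  push_cast
  ring

theorem deriv_besselSeries_quadratic (m : ℕ) :
    deriv (fun s => besselSeries m (A * s ^ 2 + B)) =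
      fun s => 2 * A * s * besselSeries (m + 1) (A * s ^ 2 + B) :=
  funext fun s => (hasDerivAt_besselSeries_quadratic A B m s).deriv

theorem iteratedDeriv_two_besselSeries_quadratic (m : ℕ) :
    iteratedDeriv 2 (fun s => besselSeries m (A * s ^ 2 + B)) =
      fun s => 2 * A * besselSeries (m + 1) (A * s ^ 2 + B) +
        (2 * A * s) ^ 2 * besselSeries (m + 2) (A * s ^ 2 + B) := by
  rw [iteratedDeriv_succ, iteratedDeriv_one, deriv_besselSeries_quadratic]
  funext s
  refine ((((hasDerivAt_id' s).const_mul (2 * A)).mul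
    (hasDerivAt_besselSeries_quadratic A B (m + 1) s))).deriv.trans ?_
  ring

theorem iteratedDeriv_three_besselSeries_quadratic (m : ℕ) :
    iteratedDeriv 3 (fun s => besselSeries m (A * s ^ 2 + B)) =
      fun s => 12 * A ^ 2 * s * besselSeries (m + 2) (A * s ^ 2 + B) +
        (2 * A * s) ^ 3 * besselSeries (m + 3) (A * s ^ 2 + B) := by
  rw [iteratedDeriv_succ, iteratedDeriv_two_besselSeries_quadratic]
  funext s
  refine (((hasDerivAt_besselSeries_quadratic A B (m + 1) s).const_mul (2 * A)).add
    ((((hasDerivAt_id' s).const_mul (2 * A)).fun_pow 2).mul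
      (hasDerivAt_besselSeries_quadratic A B (m + 2) s))).deriv.trans ?_
  push_cast
  ring

end Quadratic

theorem F_eq_besselSeries (lam c u s : ℝ) :
    F lam c u s = besselSeries 0 ((lam / (2 * c)) ^ 2 * (c ^ 2 * s ^ 2 - u ^ 2)) := by
  refine tsum_congr fun k => ?_
  rw [mul_pow, ← pow_mul, Nat.add_zero, Nat.cast_mul, ← sq, inv_mul_eq_div]

theorem density3d_eq {lam c : ℝ} (hlam : lam ≠ 0) (hc : c ≠ 0) (u t : ℝ) :
    density3d lam c u t = exp (-(lam * t)) / c *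
      ∑ m : Fin 4, ![-lam, lam - 3 * lam ^ 2 * t / 2, lam ^ 3 * t ^ 2 / 2 + 3 * lam ^ 2 * t,
        lam ^ 4 * t ^ 3 / 2] m * besselSeries m ((lam / (2 * c)) ^ 2 * ((c * t) ^ 2 - u ^ 2)) := by
  have hF : (fun s => F lam c u s) = fun s =>
      besselSeries 0 ((lam / (2 * c)) ^ 2 * c ^ 2 * s ^ 2 + -((lam / (2 * c)) ^ 2 * u ^ 2)) := by
    funext s
    rw [F_eq_besselSeries]
    ring_nf
  rw [density3d, show F lam c u t = _ from congrFun hF t, hF, deriv_besselSeries_quadratic,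
    iteratedDeriv_two_besselSeries_quadratic, iteratedDeriv_three_besselSeries_quadratic,
    Fin.sum_univ_four]
  simp only [Fin.isValue, Matrix.cons_val, Fin.coe_ofNat_eq_mod, Nat.reduceMod]
  rw [show (lam / (2 * c)) ^ 2 * c ^ 2 * t ^ 2 + -((lam / (2 * c)) ^ 2 * u ^ 2) =
    (lam / (2 * c)) ^ 2 * ((c * t) ^ 2 - u ^ 2) by ring]
  field_simp
  ring

theorem integral_sub_sq_pow_succ (a : ℝ) (k : ℕ) :
    (2 * k + 3) * ∫ u in (0 : ℝ)..a, (a ^ 2 - u ^ 2) ^ (k + 1) =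
      (2 * k + 2) * a ^ 2 * ∫ u in (0 : ℝ)..a, (a ^ 2 - u ^ 2) ^ k := by
  have hcont : ∀ n : ℕ, Continuous fun u : ℝ => (a ^ 2 - u ^ 2) ^ n := by fun_prop
  -- integrate by parts: `u (a² - u²)^(k+1)` vanishes at both ends
  have hderiv : ∀ u ∈ Set.uIcc 0 a, HasDerivAt (fun u : ℝ => u * (a ^ 2 - u ^ 2) ^ (k + 1))
      ((2 * k + 3) * (a ^ 2 - u ^ 2) ^ (k + 1) - (2 * k + 2) * a ^ 2 * (a ^ 2 - u ^ 2) ^ k) u := by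
    intro u _
    refine ((hasDerivAt_id' u).mul
      (((hasDerivAt_pow 2 u).const_sub (a ^ 2)).fun_pow (k + 1))).congr_deriv ?_
    push_cast
    ring
  have hftc := intervalIntegral.integral_eq_sub_of_hasDerivAt hderiv
    ((((hcont _).const_mul _).sub ((hcont _).const_mul _)).intervalIntegrable _ _)
  rw [intervalIntegral.integral_sub (((hcont _).const_mul _).intervalIntegrable _ _)
    (((hcont _).const_mul _).intervalIntegrable _ _), intervalIntegral.integral_const_mul,
    intervalIntegral.integral_const_mul] at hftc
  simp only [sub_self, zero_pow (Nat.succ_ne_zero k), mul_zero] at hftc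
  linarith

theorem integral_sub_sq_pow (a : ℝ) (k : ℕ) :
    ∫ u in (0 : ℝ)..a, (a ^ 2 - u ^ 2) ^ k =
      a ^ (2 * k + 1) * 4 ^ k * (k ! : ℝ) ^ 2 / (2 * k + 1)! := by
  induction k with
  | zero => simp
  | succ k ih =>
    have h := integral_sub_sq_pow_succ a k
    rw [ih] at h
    have : (2 * k + 3 : ℝ) ≠ 0 := by positivity
    rw [← mul_right_inj' this, h]
    simp only [Nat.mul_succ, Nat.factorial_succ]
    push_cast
    field_simp
    ring

noncomputable def besselMean (m : ℕ) (y : ℝ) : ℝ :=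
  ∑' k : ℕ, (k ! : ℝ) / ((2 * k + 1)! * (k + m)! : ℕ) * y ^ k

theorem integral_besselSeries (m : ℕ) (q a : ℝ) :
    ∫ u in (0 : ℝ)..a, besselSeries m (q * (a ^ 2 - u ^ 2)) =
      a * besselMean m (4 * q * a ^ 2) := by
  set coeff : ℕ → ℝ := fun k => ((k ! * (k + m)! : ℕ) : ℝ)⁻¹
  have hbound : ∀ k, ∀ u ∈ Set.uIoc 0 a,
      ‖coeff k * (q * (a ^ 2 - u ^ 2)) ^ k‖ ≤ coeff k * (|q| * a ^ 2) ^ k := by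
    intro k u hu
    have hu2 : u ^ 2 ≤ a ^ 2 := by
      rw [Set.mem_uIoc] at hu
      rcases hu with ⟨h0, h1⟩ | ⟨h0, h1⟩ <;> nlinarith
    rw [norm_mul, norm_pow, norm_mul, Real.norm_of_nonneg (by positivity), Real.norm_eq_abs q,
      Real.norm_eq_abs, abs_of_nonneg (sub_nonneg.2 hu2)]
    gcongr
    linarith [sq_nonneg u]
  have hsum := intervalIntegral.hasSum_integral_of_dominated_convergence
    (f := fun u => besselSeries m (q * (a ^ 2 - u ^ 2)))
    (fun k _ => coeff k * (|q| * a ^ 2) ^ k)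
    (fun k => (by fun_prop : Continuous fun u => coeff k * (q * (a ^ 2 - u ^ 2)) ^ k)
      |>.aestronglyMeasurable)
    (fun k => Filter.Eventually.of_forall (hbound k))
    (Filter.Eventually.of_forall fun _ _ => summable_besselSeries m _)
    (μ := MeasureTheory.volume) intervalIntegrable_const
    (Filter.Eventually.of_forall fun u _ => (summable_besselSeries m (q * (a ^ 2 - u ^ 2))).hasSum)
  rw [← hsum.tsum_eq, besselMean, ← tsum_mul_left]
  refine tsum_congr fun k => ?_
  simp only [mul_pow, intervalIntegral.integral_const_mul, integral_sub_sq_pow, coeff]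
  push_cast
  field_simp
  ring

theorem mul_besselMean_zero (z : ℝ) : z * besselMean 0 (z ^ 2) = sinh z := by
  rw [besselMean, ← tsum_mul_left, ((hasSum_sinh z).congr_fun fun k => ?_).tsum_eq]
  simp only [add_zero]
  push_cast
  field_simp
  ring

theorem sq_mul_besselMean_one (z : ℝ) : z ^ 2 * besselMean 1 (z ^ 2) = 2 * (cosh z - 1) := by
  rw [besselMean, ← tsum_mul_left,
    ((((hasSum_nat_add_iff' 1).mpr (hasSum_cosh z)).mul_left 2).congr_fun fun k => ?_).tsum_eq]
  · simp
  · simp only [Nat.mul_succ, Nat.factorial_succ]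
    push_cast
    field_simp
    ring

theorem pow_four_mul_besselMean_two (z : ℝ) :
    z ^ 4 * besselMean 2 (z ^ 2) = 4 * z * (sinh z - z) - 4 * (cosh z - 1 - z ^ 2 / 2) := by
  rw [besselMean, ← tsum_mul_left,
    (((((hasSum_nat_add_iff' 1).mpr (hasSum_sinh z)).mul_left (4 * z)).sub
    (((hasSum_nat_add_iff' 2).mpr (hasSum_cosh z)).mul_left 4)).congr_fun fun k => ?_).tsum_eq]
  · simp only [Finset.sum_range_succ, Finset.sum_range_zero, Nat.factorial]
    push_cast
    ring
  · simp only [Nat.mul_succ, Nat.factorial_succ]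
    push_cast
    field_simp
    ring

theorem pow_six_mul_besselMean_three (z : ℝ) :
    z ^ 6 * besselMean 3 (z ^ 2) = 8 * (z ^ 2 * (cosh z - 1 - z ^ 2 / 2) -
      3 * z * (sinh z - z - z ^ 3 / 6) + 3 * (cosh z - 1 - z ^ 2 / 2 - z ^ 4 / 24)) := by
  rw [besselMean, ← tsum_mul_left,
    ((((((hasSum_nat_add_iff' 2).mpr (hasSum_cosh z)).mul_left (8 * z ^ 2)).sub
    (((hasSum_nat_add_iff' 2).mpr (hasSum_sinh z)).mul_left (24 * z))).add
    (((hasSum_nat_add_iff' 3).mpr (hasSum_cosh z)).mul_left 24)).congr_fun fun k => ?_).tsum_eq]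
  · simp only [Finset.sum_range_succ, Finset.sum_range_zero, Nat.factorial]
    push_cast
    ring
  · simp only [Nat.mul_succ, Nat.factorial_succ]
    push_cast
    field_simp
    ring

theorem besselMean_combination_eq {z : ℝ} (hz : z ≠ 0) :
    -z * besselMean 0 (z ^ 2) + (z - 3 * z ^ 2 / 2) * besselMean 1 (z ^ 2) +
      (z ^ 3 / 2 + 3 * z ^ 2) * besselMean 2 (z ^ 2) + z ^ 4 / 2 * besselMean 3 (z ^ 2) =
        exp z - 1 - z - z ^ 2 / 2 := by
  refine mul_left_cancel₀ (pow_ne_zero 6 hz) ?_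
  linear_combination (-z ^ 6) * mul_besselMean_zero z +
    (z ^ 5 - 3 * z ^ 6 / 2) * sq_mul_besselMean_one z +
    (z ^ 5 / 2 + 3 * z ^ 4) * pow_four_mul_besselMean_two z +
    z ^ 4 / 2 * pow_six_mul_besselMean_three z + z ^ 6 * cosh_add_sinh z

theorem integral_density3d
    (lam c t : ℝ) (hlam : 0 < lam) (hc : 0 < c) (ht : 0 < t) :
    ∫ u in (0 : ℝ)..(c * t), density3d lam c u t =
      1 - Real.exp (-(lam * t)) - lam * t * Real.exp (-(lam * t)) -
        lam ^ 2 * t ^ 2 / 2 * Real.exp (-(lam * t)) := by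
  rw [intervalIntegral.integral_congr fun u _ => density3d_eq hlam.ne' hc.ne' u t,
    intervalIntegral.integral_const_mul, intervalIntegral.integral_finsetSum fun m _ =>
      (by fun_prop : Continuous _).intervalIntegrable _ _]
  simp only [intervalIntegral.integral_const_mul, integral_besselSeries, Fin.sum_univ_four,
    Fin.isValue, Matrix.cons_val, Fin.coe_ofNat_eq_mod, Nat.reduceMod]
  rw [show 4 * (lam / (2 * c)) ^ 2 * (c * t) ^ 2 = (lam * t) ^ 2 by field_simp; ring, exp_neg]
  have hcomb := besselMean_combination_eq (mul_pos hlam ht).ne'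
  rw [mul_pow] at hcomb
  field_simp
  linear_combination 2 * hcomb
end
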